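/- Assume condition (H): π_n^n > 0 and 0 ≤ π_i^n ≤ π_i^{n-1} for all i < n and n ≥ 1. Then there is a unique simple transport plan from π^n to π^{n+1}, given by z_{i,i} = π_i^{n+1} and z_{i,n+1} = π_i^n − π_i^{n+1} for 0 ≤ i ≤ n, and its cost equals Σ_{i=0}^n (π_i^n − π_i^{n+1}) d_{i-1,n}. -/
import Mathlib


/-- `p` is a probability distribution on `ℕ` supported on `{0,…,n}`. -/
def IsProbOn (p : ℕ → ℝ) (n : ℕ) : Prop :=
  (∀ i, 0 ≤ p i) ∧ (∀ i, n < i → p i = 0) ∧ ∑ i ∈ Finset.range (n + 1), p i = 1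

/-- `z` is a transport plan from `μ` (supported on `{0,…,m}`) to `ν` (supported on `{0,…,n}`):
a nonnegative matrix on the rectangle `{0,…,m} × {0,…,n}` with row sums `μ` and column sums `ν`. -/
def IsPlan (μ ν : ℕ → ℝ) (m n : ℕ) (z : ℕ → ℕ → ℝ) : Prop :=
  (∀ i j, 0 ≤ z i j) ∧
  (∀ i j, m < i ∨ n < j → z i j = 0) ∧
  (∀ i, i ≤ m → ∑ j ∈ Finset.range (n + 1), z i j = μ i) ∧
  (∀ j, j ≤ n → ∑ i ∈ Finset.range (m + 1), z i j = ν j)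

/-- Transport cost of the plan `z` with ground cost `(i,j) ↦ D i j` (where `D i j`
encodes `d_{i-1,j-1}` of the paper, indices shifted by one so that `0` plays the role of `-1`). -/
noncomputable def cost (D : ℕ → ℕ → ℝ) (m n : ℕ) (z : ℕ → ℕ → ℝ) : ℝ :=
  ∑ i ∈ Finset.range (m + 1), ∑ j ∈ Finset.range (n + 1), z i j * D i j

/-- `D` is the recursive optimal transport family associated with the weights `π`:
indices are shifted by one, so `D (m+1) (n+1) = d_{m,n}`, `D 0 (j+1) = d_{-1,j} = 1`,
`D 0 0 = d_{-1,-1} = 0`, and `d_{m,n}` is the minimum transport cost from `π m` to `π n`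
with ground cost `(i,j) ↦ d_{i-1,j-1} = D i j`. -/
def IsRecursiveOT (π : ℕ → ℕ → ℝ) (D : ℕ → ℕ → ℝ) : Prop :=
  D 0 0 = 0 ∧ (∀ j, D 0 (j + 1) = 1) ∧ (∀ i, D (i + 1) 0 = 1) ∧
  ∀ m n, IsLeast {c : ℝ | ∃ z, IsPlan (π m) (π n) m n z ∧ c = cost D m n z}
    (D (m + 1) (n + 1))

/-- Condition (H): `π_n^n > 0` and `π_i^n ≤ π_i^{n-1}` for `i < n`. -/
def CondH (π : ℕ → ℕ → ℝ) : Prop :=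
  ∀ n, 0 < π (n + 1) (n + 1) ∧ ∀ i, i ≤ n → π (n + 1) i ≤ π n i

section Aux

variable (π D : ℕ → ℕ → ℝ)

lemma D_nonneg (hD : IsRecursiveOT π D) : ∀ i j, 0 ≤ D i j := by
  have key : ∀ k i j, i + j ≤ k → 0 ≤ D i j := by
    intro k
    induction k with
    | zero =>
      intro i j h
      have hi : i = 0 := by omega
      have hj : j = 0 := by omega
      subst hi; subst hj; rw [hD.1]
    | succ k ih =>
      intro i j h
      match i, j with
      | 0, 0 => rw [hD.1]
      | 0, j + 1 => rw [hD.2.1]; norm_num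
      | i + 1, 0 => rw [hD.2.2.1]; norm_num
      | i + 1, j + 1 =>
        obtain ⟨z, hz, hc⟩ := (hD.2.2.2 i j).1
        rw [hc]
        apply Finset.sum_nonneg
        intro a ha
        apply Finset.sum_nonneg
        intro b hb
        have ha' := Finset.mem_range.1 ha
        have hb' := Finset.mem_range.1 hb
        exact mul_nonneg (hz.1 a b) (ih a b (by omega))
  intro i j
  exact key (i + j) i j le_rfl

lemma D_diag (hπ : ∀ n, IsProbOn (π n) n) (hD : IsRecursiveOT π D) :
    ∀ m, D m m = 0 := by
  intro m
  induction m using Nat.strong_induction_on with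
  | _ m ihm =>
    match m with
    | 0 => exact hD.1
    | m + 1 =>
      refine le_antisymm ?_ (D_nonneg π D hD _ _)
      set zid : ℕ → ℕ → ℝ := fun i j => if i = j ∧ i ≤ m then π m i else 0 with hzid
      have hzid' : ∀ i j, zid i j = if i = j ∧ i ≤ m then π m i else 0 := fun i j => rfl
      have hplan : IsPlan (π m) (π m) m m zid := by
        refine ⟨?_, ?_, ?_, ?_⟩
        · intro i j
          rw [hzid']
          split
          · exact (hπ m).1 i
          · exact le_refl 0
        · intro i j h
          rw [hzid', if_neg (by omega)]
        · intro i hi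
          rw [Finset.sum_eq_single_of_mem i (Finset.mem_range.2 (by omega))]
          · rw [hzid', if_pos ⟨rfl, hi⟩]
          · intro b hbm hb
            have := Finset.mem_range.1 hbm
            rw [hzid', if_neg (by omega)]
        · intro j hj
          rw [Finset.sum_eq_single_of_mem j (Finset.mem_range.2 (by omega))]
          · rw [hzid', if_pos ⟨rfl, hj⟩]
          · intro b hbm hb
            have := Finset.mem_range.1 hbm
            rw [hzid', if_neg (by omega)]
      have hmem : cost D m m zid ∈
          {c : ℝ | ∃ z, IsPlan (π m) (π m) m m z ∧ c = cost D m m z} := ⟨zid, hplan, rfl⟩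
      have hle := (hD.2.2.2 m m).2 hmem
      have hzero : cost D m m zid = 0 := by
        unfold cost
        apply Finset.sum_eq_zero
        intro i hi
        apply Finset.sum_eq_zero
        intro j hj
        by_cases hij : i = j ∧ i ≤ m
        · obtain ⟨rfl, _⟩ := hij
          rw [ihm i (by omega)]; ring
        · rw [hzid', if_neg hij]; ring
      rw [hzero] at hle
      exact hle

end Aux

/-- under condition (H) there is a unique simple transport plan from `π^n`
to `π^{n+1}`, namely `z i i = π_i^{n+1}`, `z i (n+1) = π_i^n − π_i^{n+1}` for `i ≤ n`,
and its cost equals `Σ_{i=0}^n (π_i^n − π_i^{n+1}) d_{i-1,n}`. -/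
theorem unique_simple_plan (π D : ℕ → ℕ → ℝ)
    (hπ : ∀ n, IsProbOn (π n) n)
    (hH : CondH π)
    (hD : IsRecursiveOT π D)
    (n : ℕ) (z0 : ℕ → ℕ → ℝ)
    (hz0 : ∀ i j, z0 i j =
      if i ≤ n ∧ j = i then π (n + 1) i
      else if i ≤ n ∧ j = n + 1 then π n i - π (n + 1) i
      else 0) :
    IsPlan (π n) (π (n + 1)) n (n + 1) z0 ∧
    (∀ i, i ≤ n → z0 i i = min (π n i) (π (n + 1) i)) ∧
    (∀ z : ℕ → ℕ → ℝ, IsPlan (π n) (π (n + 1)) n (n + 1) z →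
      (∀ i, i ≤ n → z i i = min (π n i) (π (n + 1) i)) → z = z0) ∧
    cost D n (n + 1) z0 = ∑ i ∈ Finset.range (n + 1), (π n i - π (n + 1) i) * D i (n + 1) := by
  have hnn : ∀ k i, 0 ≤ π k i := fun k i => (hπ k).1 i
  have hmono : ∀ i, i ≤ n → π (n + 1) i ≤ π n i := (hH n).2
  have hsum1 : ∑ i ∈ Finset.range (n + 1), π n i = 1 := (hπ n).2.2
  have hsum2 : ∑ i ∈ Finset.range (n + 2), π (n + 1) i = 1 := (hπ (n + 1)).2.2
  have hcolz0 : ∑ i ∈ Finset.range (n + 1), (π n i - π (n + 1) i) = π (n + 1) (n + 1) := by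
    rw [Finset.sum_sub_distrib, hsum1]
    have : ∑ i ∈ Finset.range (n + 2), π (n + 1) i
        = ∑ i ∈ Finset.range (n + 1), π (n + 1) i + π (n + 1) (n + 1) :=
      Finset.sum_range_succ _ _
    rw [hsum2] at this
    linarith
  have hplan0 : IsPlan (π n) (π (n + 1)) n (n + 1) z0 := by
    refine ⟨?_, ?_, ?_, ?_⟩
    · intro i j
      rw [hz0]
      split
      · exact hnn _ _
      · split
        · rename_i h1 h2
          have := hmono i h2.1
          linarith
        · exact le_refl 0
    · intro i j h
      rw [hz0, if_neg (by omega), if_neg (by omega)]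
    · intro i hi
      rw [Finset.sum_range_succ]
      rw [Finset.sum_eq_single_of_mem i (Finset.mem_range.2 (by omega))]
      · rw [hz0 i i, hz0 i (n + 1), if_pos ⟨hi, rfl⟩, if_neg (by omega),
          if_pos ⟨hi, rfl⟩]
        ring
      · intro b hbm hb
        have := Finset.mem_range.1 hbm
        rw [hz0, if_neg (by omega), if_neg (by omega)]
    · intro j hj
      by_cases hjn : j ≤ n
      · rw [Finset.sum_eq_single_of_mem j (Finset.mem_range.2 (by omega))]
        · rw [hz0, if_pos ⟨hjn, rfl⟩]
        · intro b hbm hb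
          have := Finset.mem_range.1 hbm
          rw [hz0, if_neg (by omega), if_neg (by omega)]
      · have hj1 : j = n + 1 := by omega
        subst hj1
        calc ∑ i ∈ Finset.range (n + 1), z0 i (n + 1)
            = ∑ i ∈ Finset.range (n + 1), (π n i - π (n + 1) i) := by
              apply Finset.sum_congr rfl
              intro i hi
              have hi' := Finset.mem_range.1 hi
              rw [hz0, if_neg (by omega), if_pos ⟨by omega, rfl⟩]
          _ = π (n + 1) (n + 1) := hcolz0
  have hmin : ∀ i, i ≤ n → min (π n i) (π (n + 1) i) = π (n + 1) i :=
    fun i hi => min_eq_right (hmono i hi)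
  refine ⟨hplan0, ?_, ?_, ?_⟩
  · intro i hi
    rw [hz0, if_pos ⟨hi, rfl⟩, hmin i hi]
  · -- uniqueness
    intro z hz hdiag
    have hdiag' : ∀ i, i ≤ n → z i i = π (n + 1) i := by
      intro i hi; rw [hdiag i hi, hmin i hi]
    have hcol : ∀ i j, i ≤ n → j ≤ n → i ≠ j → z i j = 0 := by
      intro i j hi hj hij
      have hcs := hz.2.2.2 j (by omega)
      have hsplit : ∑ i' ∈ Finset.range (n + 1), z i' j
          = z j j + ∑ i' ∈ (Finset.range (n + 1)).erase j, z i' j :=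
        (Finset.add_sum_erase _ _ (Finset.mem_range.2 (by omega))).symm
      rw [hcs, hdiag' j hj] at hsplit
      have hrest : ∑ i' ∈ (Finset.range (n + 1)).erase j, z i' j = 0 := by linarith
      exact (Finset.sum_eq_zero_iff_of_nonneg (fun i' _ => hz.1 i' j)).1 hrest i
        (Finset.mem_erase.2 ⟨hij, Finset.mem_range.2 (by omega)⟩)
    funext i j
    by_cases hi : i ≤ n
    · by_cases hj : j ≤ n + 1
      · by_cases hjn : j ≤ n
        · by_cases hij : j = i
          · subst hij
            rw [hdiag' j hjn, hz0, if_pos ⟨hjn, rfl⟩]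
          · rw [hcol i j hi hjn (fun h => hij h.symm), hz0,
              if_neg (by omega), if_neg (by omega)]
        · have hj1 : j = n + 1 := by omega
          subst hj1
          have hrs := hz.2.2.1 i hi
          rw [Finset.sum_range_succ] at hrs
          have hfirst : ∑ j' ∈ Finset.range (n + 1), z i j' = z i i := by
            rw [Finset.sum_eq_single_of_mem i (Finset.mem_range.2 (by omega))]
            intro b hbm hb
            have := Finset.mem_range.1 hbm
            exact hcol i b hi (by omega) (fun h => hb h.symm)
          rw [hfirst, hdiag' i hi] at hrs
          rw [hz0, if_neg (by omega), if_pos ⟨hi, rfl⟩]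
          linarith
      · rw [hz.2.1 i j (Or.inr (by omega)), hz0, if_neg (by omega), if_neg (by omega)]
    · rw [hz.2.1 i j (Or.inl (by omega)), hz0, if_neg (by omega), if_neg (by omega)]
  · -- cost
    unfold cost
    apply Finset.sum_congr rfl
    intro i hi
    have hi' := Finset.mem_range.1 hi
    rw [Finset.sum_range_succ]
    rw [Finset.sum_eq_single_of_mem i (Finset.mem_range.2 (by omega))]
    · rw [hz0 i i, if_pos ⟨by omega, rfl⟩, D_diag π D hπ hD i,
        hz0 i (n + 1), if_neg (by omega), if_pos ⟨by omega, rfl⟩]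
      ring
    · intro b hbm hb
      have := Finset.mem_range.1 hbm
      rw [hz0, if_neg (by omega), if_neg (by omega)]
      ring
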